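/- Spearman's rho of the empirical beta copula equals ((n−1)/(n+1)) times the sample Spearman's rho: ρ(ℂₙ^β) = ((n−1)/(n+1)) · ρ̂ₙ, where ρ(C) = 12∫₀¹∫₀¹[C(u₁,u₂) − u₁u₂]du₁du₂ and ρ̂ₙ = (12/(n(n²−1))) Σᵢ (R_{i1} − (n+1)/2)(R_{i2} − (n+1)/2). -/

import Mathlib

/-- The CDF of the Beta(r, n+1−r) distribution:
`F_{n,r}(u) = (n!/((r−1)!(n−r)!)) ∫₀ᵘ t^{r−1}(1−t)^{n−r} dt`. -/
noncomputable def betaCDF (n r : ℕ) (u : ℝ) : ℝ :=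
  ((n.factorial : ℝ) / ((r - 1).factorial * (n - r).factorial)) *
    ∫ t in (0 : ℝ)..u, t ^ (r - 1) * (1 - t) ^ (n - r)

/-- The bivariate empirical beta copula `ℂₙ^β(u₁,u₂) = (1/n) Σᵢ F_{n,R_{i1}}(u₁) F_{n,R_{i2}}(u₂)`. -/
noncomputable def empBetaCopula2 (n : ℕ) (R₁ R₂ : Fin n → ℕ) (u₁ u₂ : ℝ) : ℝ :=
  (1 / n) * ∑ i : Fin n, betaCDF n (R₁ i) u₁ * betaCDF n (R₂ i) u₂

/-- Population Spearman's rho of a bivariate copula: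
`ρ(C) = 12 ∫₀¹∫₀¹ [C(u₁,u₂) − u₁u₂] du₁ du₂`. -/
noncomputable def spearmanRho (C : ℝ → ℝ → ℝ) : ℝ :=
  12 * ∫ u₁ in (0 : ℝ)..1, ∫ u₂ in (0 : ℝ)..1, (C u₁ u₂ - u₁ * u₂)

/-- The sample Spearman's rho
`ρ̂ₙ = (12/(n(n²−1))) Σᵢ (R_{i1} − (n+1)/2)(R_{i2} − (n+1)/2)`. -/
noncomputable def sampleSpearmanRho (n : ℕ) (R₁ R₂ : Fin n → ℕ) : ℝ :=
  (12 / (n * (n ^ 2 - 1) : ℝ)) *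
    ∑ i : Fin n, ((R₁ i : ℝ) - (n + 1) / 2) * ((R₂ i : ℝ) - (n + 1) / 2)

open intervalIntegral MeasureTheory

lemma prod_fact_aux (a b : ℕ) :
    a.factorial * ∏ j ∈ Finset.range (b+1), (a+1+j) = (a+b+1).factorial := by
  induction b with
  | zero => simp [Nat.factorial_succ, Nat.mul_comm]
  | succ b ih =>
    rw [Finset.prod_range_succ, ← Nat.mul_assoc, ih,
      show a+(b+1)+1 = (a+b+1)+1 from by ring, Nat.factorial_succ (a+b+1)]
    ring

lemma betaNatInt (a b : ℕ) :
    ∫ x in (0:ℝ)..1, x ^ a * (1-x) ^ b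
      = (a.factorial * b.factorial : ℝ) / (a+b+1).factorial := by
  have h := Complex.betaIntegral_eval_nat_add_one_right
    (u := (a:ℂ)+1) (by simp; positivity) b
  rw [Complex.betaIntegral] at h
  have h2 : ∀ x : ℝ, (x:ℂ) ^ ((a:ℂ)+1-1) * (1-(x:ℂ)) ^ (((b:ℕ)+1:ℂ)-1)
      = ((x ^ a * (1-x) ^ b : ℝ) : ℂ) := by
    intro x
    push_cast
    rw [add_sub_cancel_right, add_sub_cancel_right, Complex.cpow_natCast,
      Complex.cpow_natCast]
  rw [intervalIntegral.integral_congr (g := fun x : ℝ => ((x ^ a * (1-x) ^ b : ℝ) : ℂ))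
    (fun x _ => h2 x)] at h
  rw [intervalIntegral.integral_ofReal] at h
  have hprod : (∏ j ∈ Finset.range (b+1), ((a:ℂ)+1+j))
      = ((∏ j ∈ Finset.range (b+1), (a+1+j) : ℕ) : ℂ) := by
    push_cast; rfl
  have hane : (a.factorial : ℂ) ≠ 0 := by exact_mod_cast a.factorial_ne_zero
  have hfact : ((a+b+1).factorial : ℂ)
      = (a.factorial : ℂ) * ((∏ j ∈ Finset.range (b+1), (a+1+j) : ℕ) : ℂ) := by
    rw [← Nat.cast_mul, prod_fact_aux]
  have : ((∫ x in (0:ℝ)..1, x ^ a * (1-x) ^ b : ℝ) : ℂ)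
      = ((a.factorial * b.factorial : ℝ) / ((a+b+1).factorial : ℝ) : ℂ) := by
    rw [h, hprod]
    push_cast [hfact]
    rw [mul_div_mul_left _ _ hane]
  exact_mod_cast this

lemma betaCDF_continuous (n r : ℕ) : Continuous (betaCDF n r) := by
  unfold betaCDF
  apply continuous_const.mul
  have hf : Continuous fun t : ℝ => t ^ (r-1) * (1-t) ^ (n-r) := by fun_prop
  exact intervalIntegral.continuous_primitive (fun a b => hf.intervalIntegrable a b) 0

lemma integral_betaCDF (n r : ℕ) (h1 : 1 ≤ r) (h2 : r ≤ n) :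
    ∫ u in (0:ℝ)..1, betaCDF n r u = 1 - (r:ℝ)/(n+1) := by
  set f : ℝ → ℝ := fun t => t ^ (r-1) * (1-t) ^ (n-r) with hfdef
  have hf : Continuous f := by fun_prop
  set F : ℝ → ℝ := fun u => ∫ t in (0:ℝ)..u, f t with hFdef
  have hF : ∀ x ∈ Set.uIcc (0:ℝ) 1, HasDerivAt F (f x) x := fun x _ =>
    intervalIntegral.integral_hasDerivAt_right (hf.intervalIntegrable 0 x)
      (hf.stronglyMeasurableAtFilter _ _) hf.continuousAt
  have hid : ∀ x ∈ Set.uIcc (0:ℝ) 1, HasDerivAt (fun y : ℝ => y) (1:ℝ) x := fun x _ =>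
    hasDerivAt_id x
  have parts := intervalIntegral.integral_mul_deriv_eq_deriv_mul hF hid
    (hf.intervalIntegrable 0 1) (continuous_const.intervalIntegrable 0 1)
  simp only [mul_one, intervalIntegral.integral_same, mul_zero] at parts
  have hFint : ∫ u in (0:ℝ)..1, F u
      = ∫ x in (0:ℝ)..1, x ^ (r-1) * (1-x) ^ (n-r+1) := by
    rw [parts]
    have : F 1 - 0 - ∫ x in (0:ℝ)..1, f x * x
        = ∫ x in (0:ℝ)..1, (f x - f x * x) := by
      rw [intervalIntegral.integral_sub (hf.intervalIntegrable 0 1)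
        ((show Continuous (fun x => f x * x) from hf.mul continuous_id').intervalIntegrable 0 1)]
      simp [hFdef]
    rw [this]
    apply intervalIntegral.integral_congr
    intro x _
    simp only [hfdef]
    rw [pow_succ]
    ring
  have hbeta := betaNatInt (r-1) (n-r+1)
  have hexp : (r-1) + (n-r+1) + 1 = n + 1 := by omega
  rw [hexp] at hbeta
  unfold betaCDF
  rw [intervalIntegral.integral_const_mul]
  rw [← hFdef, ← hfdef] at *
  rw [hFint, hbeta]
  have e1 : (n-r+1).factorial = (n-r+1) * (n-r).factorial := Nat.factorial_succ _
  have e2 : (n+1).factorial = (n+1) * n.factorial := Nat.factorial_succ _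
  rw [e1, e2]
  have hcast : ((n-r:ℕ):ℝ) = (n:ℝ) - r := by
    push_cast [Nat.cast_sub h2]; ring
  push_cast [hcast]
  have h1' : (0:ℝ) < (r-1).factorial := by positivity
  have h2' : (0:ℝ) < (n-r).factorial := by positivity
  have h3' : (0:ℝ) < n.factorial := by positivity
  have h4' : (0:ℝ) < (n:ℝ)+1 := by positivity
  field_simp
  ring

lemma gauss_real (n : ℕ) : ∑ r ∈ Finset.Icc 1 n, (r:ℝ) = n*(n+1)/2 := by
  induction n with
  | zero => simp
  | succ m ih =>
    rw [← Finset.insert_Icc_right_eq_Icc_add_one (by omega), Finset.sum_insert (by simp), ih]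
    push_cast
    ring

lemma sum_ranks (n : ℕ) (R : Fin n → ℕ) (hmem : ∀ i, R i ∈ Finset.Icc 1 n)
    (hinj : Function.Injective R) :
    ∑ i : Fin n, (R i : ℝ) = n*(n+1)/2 := by
  have himg : Finset.image R Finset.univ = Finset.Icc 1 n := by
    apply Finset.eq_of_subset_of_card_le
    · intro x hx
      simp only [Finset.mem_image, Finset.mem_univ, true_and] at hx
      obtain ⟨i, hi⟩ := hx
      exact hi ▸ hmem i
    · rw [Nat.card_Icc, Finset.card_image_of_injective _ hinj, Finset.card_univ]
      simp
  rw [← gauss_real, ← himg, Finset.sum_image (fun a _ b _ h => hinj h)]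

set_option maxHeartbeats 1000000 in
/-- Spearman's rho of the empirical beta copula equals `((n−1)/(n+1))` times the sample
Spearman's rho: `ρ(ℂₙ^β) = ((n−1)/(n+1)) ρ̂ₙ`. -/
theorem spearmanRho_empBetaCopula (n : ℕ) (hn : 2 ≤ n) (R₁ R₂ : Fin n → ℕ)
    (hmem₁ : ∀ i, R₁ i ∈ Finset.Icc 1 n) (hmem₂ : ∀ i, R₂ i ∈ Finset.Icc 1 n)
    (hperm₁ : Function.Injective R₁) (hperm₂ : Function.Injective R₂) :
    spearmanRho (empBetaCopula2 n R₁ R₂)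
      = (((n : ℝ) - 1) / ((n : ℝ) + 1)) * sampleSpearmanRho n R₁ R₂ := by
  have hr₁ : ∀ i, 1 ≤ R₁ i ∧ R₁ i ≤ n := fun i => Finset.mem_Icc.1 (hmem₁ i)
  have hr₂ : ∀ i, 1 ≤ R₂ i ∧ R₂ i ≤ n := fun i => Finset.mem_Icc.1 (hmem₂ i)
  -- inner integral
  have hinner : ∀ u₁ : ℝ,
      (∫ u₂ in (0:ℝ)..1, (empBetaCopula2 n R₁ R₂ u₁ u₂ - u₁ * u₂))
        = (1/n : ℝ) * ∑ i : Fin n,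
            betaCDF n (R₁ i) u₁ * (1 - (R₂ i : ℝ)/(n+1)) - u₁ * (1/2) := by
    intro u₁
    unfold empBetaCopula2
    have hc : Continuous fun u₂ : ℝ => ∑ i : Fin n,
        betaCDF n (R₁ i) u₁ * betaCDF n (R₂ i) u₂ :=
      continuous_finset_sum _ fun i _ =>
        (continuous_const.mul (betaCDF_continuous n (R₂ i)))
    rw [intervalIntegral.integral_sub ((show Continuous (fun u₂ : ℝ => (1 / (n:ℝ)) * ∑ i : Fin n,
        betaCDF n (R₁ i) u₁ * betaCDF n (R₂ i) u₂) from continuous_const.mul hc).intervalIntegrable 0 1)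
      ((show Continuous (fun u₂ : ℝ => u₁ * u₂) from continuous_const.mul continuous_id').intervalIntegrable 0 1)]
    rw [intervalIntegral.integral_const_mul,
      intervalIntegral.integral_finset_sum
        (fun i _ => ((show Continuous (fun x : ℝ => betaCDF n (R₁ i) u₁ * betaCDF n (R₂ i) x) from continuous_const.mul (betaCDF_continuous n (R₂ i))).intervalIntegrable 0 1))]
    have hs : ∀ i : Fin n,
        (∫ x in (0:ℝ)..1, betaCDF n (R₁ i) u₁ * betaCDF n (R₂ i) x)
          = betaCDF n (R₁ i) u₁ * (1 - (R₂ i : ℝ)/(n+1)) := fun i => by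
      rw [intervalIntegral.integral_const_mul,
        integral_betaCDF n (R₂ i) (hr₂ i).1 (hr₂ i).2]
    rw [Finset.sum_congr rfl fun i _ => hs i,
      intervalIntegral.integral_const_mul, integral_id]
    norm_num
  unfold spearmanRho
  rw [intervalIntegral.integral_congr (fun u₁ _ => hinner u₁)]
  -- outer integral
  have houter : (∫ u₁ in (0:ℝ)..1,
      ((1/n : ℝ) * ∑ i : Fin n, betaCDF n (R₁ i) u₁ * (1 - (R₂ i : ℝ)/(n+1)) - u₁ * (1/2)))
      = (1/n : ℝ) * ∑ i : Fin n,
          (1 - (R₁ i : ℝ)/(n+1)) * (1 - (R₂ i : ℝ)/(n+1)) - 1/2 * (1/2) := by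
    have hc : Continuous fun u₁ : ℝ => ∑ i : Fin n,
        betaCDF n (R₁ i) u₁ * (1 - (R₂ i : ℝ)/(n+1)) :=
      continuous_finset_sum _ fun i _ =>
        ((betaCDF_continuous n (R₁ i)).mul continuous_const)
    rw [intervalIntegral.integral_sub ((show Continuous (fun u₁ : ℝ => (1 / (n:ℝ)) * ∑ i : Fin n,
        betaCDF n (R₁ i) u₁ * (1 - (R₂ i : ℝ)/(n+1))) from continuous_const.mul hc).intervalIntegrable 0 1)
      ((show Continuous (fun u₁ : ℝ => u₁ * (1/2 : ℝ)) from continuous_id'.mul continuous_const).intervalIntegrable 0 1)]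
    rw [intervalIntegral.integral_const_mul,
      intervalIntegral.integral_finset_sum
        (fun i _ => ((show Continuous (fun x : ℝ => betaCDF n (R₁ i) x * (1 - (R₂ i : ℝ)/(n+1))) from (betaCDF_continuous n (R₁ i)).mul continuous_const).intervalIntegrable 0 1))]
    have hs : ∀ i : Fin n,
        (∫ x in (0:ℝ)..1, betaCDF n (R₁ i) x * (1 - (R₂ i : ℝ)/(n+1)))
          = (1 - (R₁ i : ℝ)/(n+1)) * (1 - (R₂ i : ℝ)/(n+1)) := fun i => by
      rw [intervalIntegral.integral_mul_const,
        integral_betaCDF n (R₁ i) (hr₁ i).1 (hr₁ i).2]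
    rw [Finset.sum_congr rfl fun i _ => hs i,
      intervalIntegral.integral_mul_const, integral_id]
    norm_num
  rw [houter]
  -- algebra
  unfold sampleSpearmanRho
  have hS₁ := sum_ranks n R₁ hmem₁ hperm₁
  have hS₂ := sum_ranks n R₂ hmem₂ hperm₂
  have hn0 : (n:ℝ) ≠ 0 := by positivity
  have hn1 : (n:ℝ) + 1 ≠ 0 := by positivity
  have hnm1 : (n:ℝ) - 1 ≠ 0 := by
    have : (2:ℝ) ≤ n := by exact_mod_cast hn
    nlinarith
  have hL : ∑ i : Fin n, (1 - (R₁ i : ℝ)/(n+1)) * (1 - (R₂ i : ℝ)/(n+1))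
      = (n:ℝ) - ((n:ℝ)*(n+1)/2)/(n+1) - ((n:ℝ)*(n+1)/2)/(n+1)
        + (∑ i : Fin n, (R₁ i : ℝ) * (R₂ i : ℝ))/((n:ℝ)+1)^2 := by
    rw [Finset.sum_congr rfl (fun i _ => show
        (1 - (R₁ i : ℝ)/(n+1)) * (1 - (R₂ i : ℝ)/(n+1))
          = 1 - (R₁ i : ℝ)/(n+1) - (R₂ i : ℝ)/(n+1)
            + (R₁ i : ℝ) * (R₂ i : ℝ)/((n:ℝ)+1)^2 from by field_simp; ring)]
    rw [Finset.sum_add_distrib, Finset.sum_sub_distrib, Finset.sum_sub_distrib,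
      Finset.sum_const, ← Finset.sum_div, ← Finset.sum_div, ← Finset.sum_div,
      hS₁, hS₂]
    simp [mul_comm]
  have hR : ∑ i : Fin n, ((R₁ i : ℝ) - ((n:ℝ)+1)/2) * ((R₂ i : ℝ) - ((n:ℝ)+1)/2)
      = (∑ i : Fin n, (R₁ i : ℝ) * (R₂ i : ℝ))
        - (((n:ℝ)+1)/2) * ((n:ℝ)*(n+1)/2) - (((n:ℝ)+1)/2) * ((n:ℝ)*(n+1)/2)
        + (n:ℝ) * (((n:ℝ)+1)/2)^2 := by
    rw [Finset.sum_congr rfl (fun i _ => show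
        ((R₁ i : ℝ) - ((n:ℝ)+1)/2) * ((R₂ i : ℝ) - ((n:ℝ)+1)/2)
          = (R₁ i : ℝ) * (R₂ i : ℝ) - (((n:ℝ)+1)/2) * (R₁ i : ℝ)
            - (((n:ℝ)+1)/2) * (R₂ i : ℝ) + (((n:ℝ)+1)/2)^2 from by ring)]
    rw [Finset.sum_add_distrib, Finset.sum_sub_distrib, Finset.sum_sub_distrib,
      Finset.sum_const, ← Finset.mul_sum, ← Finset.mul_sum, hS₁, hS₂]
    simp [mul_comm]
  rw [hL, hR]
  set Q := ∑ i : Fin n, (R₁ i : ℝ) * (R₂ i : ℝ)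
  have hsq : (n:ℝ)^2 - 1 = ((n:ℝ)-1) * ((n:ℝ)+1) := by ring
  rw [hsq]
  field_simp
  ring
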